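/- A hypergraph H is S-connex if and only if it contains no S-path, where an S-path is a chordless path (x, z1, ..., zk, y) with k ≥ 1, x,y ∈ S, and z1,...,zk ∉ S. In particular, if variables a,b,c of an acyclic hypergraph form the pattern where a,b ∈ S are non-neighbors and c ∉ S is a neighbor of both, then H is not S-connex. -/

import Mathlib

/-- Two vertices are neighbors in a hypergraph if some hyperedge contains both. -/
def Nbr {V : Type*} (E : Finset (Finset V)) (x y : V) : Prop :=
  ∃ e ∈ E, x ∈ e ∧ y ∈ e

/-- Join tree: a tree on the hyperedges with the running intersection property. -/
def IsJoinTreeOf {V ι : Type*} (T : SimpleGraph ι) (lab : ι → Finset V)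
    (E : Finset (Finset V)) : Prop :=
  T.IsTree ∧ (∀ i, lab i ∈ E) ∧ (∀ e ∈ E, ∃ i, lab i = e) ∧
    ∀ v : V, (T.induce {i | v ∈ lab i}).Preconnected

/-- A hypergraph is acyclic if it admits a join tree. -/
def HGAcyclic {V : Type*} (E : Finset (Finset V)) : Prop :=
  ∃ (ι : Type) (T : SimpleGraph ι) (lab : ι → Finset V), IsJoinTreeOf T lab E

/-- A hypergraph `E` is `S`-connex: there is a join tree of an inclusive
extension of `E` with a connected subtree whose labels cover exactly `S`. -/
def SConnex {V : Type*} (E : Finset (Finset V)) (S : Finset V) : Prop :=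
  ∃ (ι : Type) (T : SimpleGraph ι) (lab : ι → Finset V),
    T.IsTree ∧ (∀ e ∈ E, ∃ i, lab i = e) ∧ (∀ i, ∃ e ∈ E, lab i ⊆ e) ∧
    (∀ v : V, (T.induce {i | v ∈ lab i}).Preconnected) ∧
    ∃ Sub : Set ι, (T.induce Sub).Preconnected ∧
      ∀ v : V, v ∈ S ↔ ∃ i ∈ Sub, v ∈ lab i

/-- A chordless path, as a list of vertices: no repeats, consecutive vertices are
neighbors, and no two non-consecutive vertices are neighbors. -/
def ChordlessList {V : Type*} (E : Finset (Finset V)) (p : List V) : Prop :=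
  p.Nodup ∧ p.Chain' (Nbr E) ∧
    ∀ i j : ℕ, i + 1 < j → ∀ a ∈ p[i]?, ∀ b ∈ p[j]?, ¬ Nbr E a b

/-- An `S`-path: a chordless path `(x, z₁, …, z_k, y)` with `k ≥ 1`,
`x, y ∈ S` and `z₁, …, z_k ∉ S`. -/
def IsSPath {V : Type*} (E : Finset (Finset V)) (S : Finset V)
    (x : V) (zs : List V) (y : V) : Prop :=
  zs ≠ [] ∧ x ∈ S ∧ y ∈ S ∧ (∀ z ∈ zs, z ∉ S) ∧
    ChordlessList E (x :: zs ++ [y])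


/-!
Both sides are equivalent to: any two vertices of `S` joined by a walk whose inner vertices avoid
`S` are neighbours. A shortest such walk between non-neighbours is chordless, i.e. an `S`-path.

If `E` is `S`-connex with subtree `Sub` and `x, z₁, …, z_k, y` is such a walk with `x`, `y`
non-neighbours, then the subtree of `x`, the union of `Sub` with the subtree of `y`, and the union
of the subtrees of `z₁, …, z_k, y` pairwise meet, so by the Helly property of subtrees they share a
node. That node cannot carry both `x` and `y`, so it lies in `Sub` and carries some `zᵢ ∉ S`,
whereas the nodes of `Sub` carry only vertices of `S`.

Conversely, the `S`-neighbours of each component of `E - S` are then pairwise adjacent, so by the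
Helly property some node of a join tree `T` of `E` carries all of them. To a copy of `T` whose
labels are cut down to `S`, attach at that node, for each component, a copy of `T` whose labels are
cut down to the component and its `S`-neighbours. The result is a join tree of an inclusive
extension of `E`, in which the first copy is a connected subtree covering exactly `S`.
-/

namespace List
variable {α : Type*} {R : α → α → Prop} {l : List α} {i j : ℕ} {a b : α}

lemma IsChain.rel_of_getElem?_eq_some (hl : l.IsChain R) (ha : l[i]? = some a)
    (hb : l[i + 1]? = some b) : R a b := by
  obtain ⟨hi, rfl⟩ := getElem?_eq_some_iff.mp hb
  obtain ⟨-, rfl⟩ := getElem?_eq_some_iff.mp ha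
  exact hl.getElem i hi

lemma IsChain.take_append_drop (hl : l.IsChain R) (ha : l[i]? = some a)
    (hb : l[j]? = some b) (hab : R a b) : (l.take (i + 1) ++ l.drop j).IsChain R := by
  refine isChain_append.mpr ⟨hl.take _, hl.drop _, fun a' ha' b' hb' => ?_⟩
  rw [take_add_one, ha, Option.toList_some, getLast?_concat, Option.mem_some_iff] at ha'
  rw [head?_drop, hb, Option.mem_some_iff] at hb'
  exact ha' ▸ hb' ▸ hab

end List

namespace SimpleGraph

variable {ι : Type*} {G : SimpleGraph ι}

lemma Walk.IsCycle.induce {s : Set ι} {u : ι} {c : G.Walk u u}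
    (hc : c.IsCycle) (hs : ∀ x ∈ c.support, x ∈ s) : (c.induce s hs).IsCycle := by
  rwa [← Walk.isCycle_map_iff_of_injective (f := (Embedding.induce s).toHom) Subtype.val_injective,
    Walk.map_induce]

lemma induce_setOf_exists_mem_preconnected_of_isChain {β : Type*} {A : β → Set ι} :
    ∀ {l : List β}, (∀ b ∈ l, (G.induce (A b)).Preconnected) →
      l.IsChain (fun b b' => (A b ∩ A b').Nonempty) →
      (G.induce {i | ∃ b ∈ l, i ∈ A b}).Preconnected
  | [], _, _ => by
    rintro ⟨_, h⟩
    simp at h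
  | [b], hA, _ => by
    have hb : {i | ∃ c ∈ [b], i ∈ A c} = A b := by
      ext
      simp
    exact hb ▸ hA b (List.mem_singleton_self b)
  | b :: b' :: l, hA, hl => by
    have hl' := List.isChain_cons_cons.mp hl
    have ih := induce_setOf_exists_mem_preconnected_of_isChain (l := b' :: l)
      (fun c hc => hA c (List.mem_cons_of_mem _ hc)) hl'.2
    have hcons : {i | ∃ c ∈ b :: b' :: l, i ∈ A c} = A b ∪ {i | ∃ c ∈ b' :: l, i ∈ A c} := by
      ext
      simp
    have hinter : (A b ∩ {i | ∃ c ∈ b' :: l, i ∈ A c}).Nonempty :=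
      let ⟨i, hib, hib'⟩ := hl'.1
      ⟨i, hib, b', by simp, hib'⟩
    rw [hcons]
    exact (induce_union_connected (hA b (by simp)) ih hinter).preconnected

variable {T : SimpleGraph ι} {s t : Set ι}

lemma Walk.induce_reachable {u v : ι} (w : T.Walk u v) (hw : ∀ x ∈ w.support, x ∈ s) :
    (T.induce s).Reachable ⟨u, hw u w.start_mem_support⟩ ⟨v, hw v w.end_mem_support⟩ :=
  ⟨w.induce s hw⟩

lemma IsAcyclic.support_subset_of_isPath (hT : T.IsAcyclic) (hs : (T.induce s).Preconnected)
    {u v : ι} (hu : u ∈ s) (hv : v ∈ s) {p : T.Walk u v} (hp : p.IsPath) :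
    ∀ x ∈ p.support, x ∈ s := by
  classical
  obtain ⟨w⟩ := hs ⟨u, hu⟩ ⟨v, hv⟩
  set w' := w.map (Embedding.induce s).toHom
  have hp' : p = w'.bypass :=
    congrArg Subtype.val <| (hT.subsingleton_path u v).elim ⟨p, hp⟩ ⟨_, w'.bypass_isPath⟩
  intro x hx
  have hx' : x ∈ w'.support := w'.support_bypass_subset_support (hp' ▸ hx)
  rw [Walk.support_map] at hx'
  obtain ⟨y, -, rfl⟩ := List.mem_map.mp hx'
  exact y.2

lemma IsAcyclic.induce_inter_preconnected (hT : T.IsAcyclic) (hs : (T.induce s).Preconnected)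
    (ht : (T.induce t).Preconnected) : (T.induce (s ∩ t)).Preconnected := by
  classical
  rintro ⟨u, hus, hut⟩ ⟨v, hvs, hvt⟩
  obtain ⟨w⟩ := hs ⟨u, hus⟩ ⟨v, hvs⟩
  have hp := (w.map (Embedding.induce s).toHom).bypass_isPath
  exact Walk.induce_reachable (s := s ∩ t) _ fun x hx =>
    ⟨hT.support_subset_of_isPath hs hus hvs hp x hx, hT.support_subset_of_isPath ht hut hvt hp x hx⟩

lemma IsAcyclic.exists_mem_support_of_isPath (hT : T.IsAcyclic) {a b c : ι} {pab : T.Walk a b}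
    {pac : T.Walk a c} {pbc : T.Walk b c} (hab : pab.IsPath) (hac : pac.IsPath)
    (hbc : pbc.IsPath) : ∃ m ∈ pab.support, m ∈ pac.support ∧ m ∈ pbc.support := by
  classical
  -- `m` is the first vertex of `pac` met when walking back from `b` to `a` along `pab`
  obtain ⟨m, hm, hmq, hfirst⟩ := pab.reverse.exists_mem_support_forall_mem_support_imp_eq
    pac.support.toFinset ⟨a, by simp⟩
  rw [List.mem_toFinset] at hm
  set q := pab.reverse.takeUntil m hmq
  set r := pac.dropUntil m hm
  have hr : r.support = m :: r.support.tail := r.cons_tail_support.symm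
  have hr_nodup : r.support.Nodup := (hac.dropUntil hm).support_nodup
  have hqr : (q.append r).IsPath := by
    rw [Walk.isPath_def, Walk.support_append, List.nodup_append]
    refine ⟨(hab.reverse.takeUntil hmq).support_nodup, (hr ▸ hr_nodup).of_cons, ?_⟩
    rintro x hxq _ hxr rfl
    have hx : x = m := hfirst x (List.mem_toFinset.mpr <|
      pac.support_dropUntil_subset_support hm (List.mem_of_mem_tail hxr)) hxq
    exact (List.nodup_cons.mp (hr ▸ hr_nodup)).1 (hx ▸ hxr)
  have hpbc : pbc = q.append r :=
    congrArg Subtype.val <| (hT.subsingleton_path b c).elim ⟨pbc, hbc⟩ ⟨_, hqr⟩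
  refine ⟨m, by simpa using hmq, hm, hpbc ▸ ?_⟩
  exact Walk.support_subset_support_append_left _ _ q.end_mem_support

lemma IsTree.inter_inter_nonempty (hT : T.IsTree) {A B C : Set ι}
    (hA : (T.induce A).Preconnected) (hB : (T.induce B).Preconnected)
    (hC : (T.induce C).Preconnected) (hBC : (B ∩ C).Nonempty) (hAC : (A ∩ C).Nonempty)
    (hAB : (A ∩ B).Nonempty) : (A ∩ B ∩ C).Nonempty := by
  classical
  obtain ⟨a, haB, haC⟩ := hBC
  obtain ⟨b, hbA, hbC⟩ := hAC
  obtain ⟨c, hcA, hcB⟩ := hAB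
  have path (u v : ι) : ∃ p : T.Walk u v, p.IsPath :=
    let ⟨w⟩ := hT.connected.preconnected u v; ⟨w.bypass, w.bypass_isPath⟩
  obtain ⟨pab, hab⟩ := path a b
  obtain ⟨pac, hac⟩ := path a c
  obtain ⟨pbc, hbc⟩ := path b c
  obtain ⟨m, hmab, hmac, hmbc⟩ := hT.isAcyclic.exists_mem_support_of_isPath hab hac hbc
  exact ⟨m, ⟨hT.isAcyclic.support_subset_of_isPath hA hbA hcA hbc m hmbc,
    hT.isAcyclic.support_subset_of_isPath hB haB hcB hac m hmac⟩,
    hT.isAcyclic.support_subset_of_isPath hC haC hbC hab m hmab⟩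

/-- The Helly property of subtrees. -/
lemma IsTree.exists_forall_mem_of_pairwise {β : Type*} (hT : T.IsTree) (K : Finset β)
    {A : β → Set ι} (hA : ∀ b ∈ K, (T.induce (A b)).Preconnected)
    (hK : ∀ b ∈ K, ∀ b' ∈ K, (A b ∩ A b').Nonempty) : ∃ i, ∀ b ∈ K, i ∈ A b := by
  induction K using Finset.cons_induction generalizing A with
  | empty => exact ⟨hT.connected.nonempty.some, by simp⟩
  | cons x K hx ih =>
    have hxK : x ∈ Finset.cons x K hx := Finset.mem_cons_self x K
    have hK' : ∀ b ∈ K, b ∈ Finset.cons x K hx := fun b hb => Finset.mem_cons_of_mem hb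
    rcases K.eq_empty_or_nonempty with rfl | ⟨b₀, hb₀⟩
    · obtain ⟨i, hi, -⟩ := hK x hxK x hxK
      exact ⟨i, by simpa using hi⟩
    obtain ⟨i, hi⟩ := ih (A := fun b => A b ∩ A x)
      (fun b hb => hT.isAcyclic.induce_inter_preconnected (hA b (hK' b hb)) (hA x hxK))
      (fun b hb b' hb' => by
        obtain ⟨m, ⟨hmb, hmb'⟩, hmx⟩ := hT.inter_inter_nonempty (hA b (hK' b hb))
          (hA b' (hK' b' hb')) (hA x hxK) (hK b' (hK' b' hb') x hxK) (hK b (hK' b hb) x hxK)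
          (hK b (hK' b hb) b' (hK' b' hb'))
        exact ⟨m, ⟨hmb, hmx⟩, hmb', hmx⟩)
    refine ⟨i, fun b hb => ?_⟩
    rcases Finset.mem_cons.mp hb with rfl | hb
    · exact (hi b₀ hb₀).2
    · exact (hi b hb).1

section Glue
variable {K : Type*} {att : K → ι}

def glue (T : SimpleGraph ι) (att : K → ι) : SimpleGraph (Option K × ι) :=
  (⊥ □ T) ⊔ fromEdgeSet (Set.range fun k => s((none, att k), (some k, att k)))

lemma glue_adj {x y : Option K × ι} : (glue T att).Adj x y ↔
    (x.1 = y.1 ∧ T.Adj x.2 y.2) ∨ ∃ k, s(x, y) = s((none, att k), (some k, att k)) := by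
  simp only [glue, sup_adj, boxProd_adj, bot_adj, false_and, false_or, fromEdgeSet_adj,
    Set.mem_range]
  constructor
  · rintro (⟨h, h'⟩ | ⟨⟨k, hk⟩, -⟩)
    · exact Or.inl ⟨h', h⟩
    · exact Or.inr ⟨k, hk.symm⟩
  · rintro (⟨h, h'⟩ | ⟨k, hk⟩)
    · exact Or.inl ⟨h', h⟩
    · refine Or.inr ⟨⟨k, hk.symm⟩, fun hxy => ?_⟩
      subst hxy
      rcases Sym2.eq_iff.mp hk with ⟨h₁, h₂⟩ | ⟨h₁, h₂⟩ <;> simpa using h₁.symm.trans h₂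

lemma glue_adj_layer {p : Option K} {i j : ι} (h : T.Adj i j) :
    (glue T att).Adj (p, i) (p, j) :=
  glue_adj.mpr (Or.inl ⟨rfl, h⟩)

lemma glue_adj_cross (k : K) : (glue T att).Adj (none, att k) (some k, att k) :=
  glue_adj.mpr (Or.inr ⟨k, rfl⟩)

lemma glue_induce_prod_preconnected {Q : Set (Option K)} (hs : (T.induce s).Preconnected)
    (hQ : Q.Subsingleton ∨ none ∈ Q ∧ ∀ k, some k ∈ Q → att k ∈ s) :
    ((glue T att).induce (Q ×ˢ s)).Preconnected := by
  have hlayer {p : Option K} (hp : p ∈ Q) {i j : ι} (hi : i ∈ s) (hj : j ∈ s) :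
      ((glue T att).induce (Q ×ˢ s)).Reachable ⟨(p, i), hp, hi⟩ ⟨(p, j), hp, hj⟩ :=
    (hs ⟨i, hi⟩ ⟨j, hj⟩).map (⟨fun i => ⟨(p, i.1), hp, i.2⟩, fun h => glue_adj_layer h⟩ :
      T.induce s →g (glue T att).induce (Q ×ˢ s))
  rintro ⟨⟨p, i⟩, hp, hi⟩ ⟨⟨q, j⟩, hq, hj⟩
  rcases hQ with hQ | ⟨hnone, hatt⟩
  · obtain rfl := hQ hp hq
    exact hlayer hp hi hj
  have hbase {p : Option K} (hp : p ∈ Q) {i : ι} (hi : i ∈ s) : ∃ (j : ι) (hj : j ∈ s),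
      ((glue T att).induce (Q ×ˢ s)).Reachable ⟨(p, i), hp, hi⟩ ⟨(none, j), hnone, hj⟩ := by
    cases p with
    | none => exact ⟨i, hi, .rfl⟩
    | some k =>
      exact ⟨att k, hatt k hp, (hlayer hp hi (hatt k hp)).trans
        (Adj.reachable (glue_adj_cross k).symm)⟩
  obtain ⟨i', hi', hii'⟩ := hbase hp hi
  obtain ⟨j', hj', hjj'⟩ := hbase hq hj
  exact hii'.trans ((hlayer hnone hi' hj').trans hjj'.symm)

lemma glue_preconnected (hT : T.Preconnected) : (glue T att).Preconnected := by
  have h := glue_induce_prod_preconnected (att := att) (Q := Set.univ)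
    (T.induceUnivIso.preconnected_iff.mpr hT) (Or.inr ⟨trivial, fun _ _ => trivial⟩)
  rwa [Set.univ_prod_univ, (glue T att).induceUnivIso.preconnected_iff] at h

lemma glue_induce_layer_isAcyclic (hT : T.IsAcyclic) (p : Option K) :
    ((glue T att).induce {x | x.1 = p}).IsAcyclic := by
  refine hT.comap ⟨fun x => x.1.2, fun {x y} h => ?_⟩ fun x y hxy => Subtype.ext
    (Prod.ext (x.2.trans y.2.symm) hxy)
  rcases glue_adj.mp h with ⟨-, h⟩ | ⟨k, hk⟩
  · exact h
  · have hxy : x.1.1 = y.1.1 := x.2.trans y.2.symm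
    rcases Sym2.eq_iff.mp hk with ⟨h₁, h₂⟩ | ⟨h₁, h₂⟩ <;>
      simp only [Function.Embedding.coe_subtype] at h₁ h₂ <;> simp [h₁, h₂] at hxy

lemma glue_cross_mem_edges {k : K} {x y : Option K × ι} (w : (glue T att).Walk x y)
    (hxy : ¬(x.1 = some k ↔ y.1 = some k)) : s((none, att k), (some k, att k)) ∈ w.edges := by
  wlog hx : x.1 = some k generalizing x y
  · simpa using this w.reverse (by tauto) (by tauto)
  induction w with
  | nil => exact absurd Iff.rfl hxy
  | @cons x m y h w ih =>
    rw [Walk.edges_cons, List.mem_cons]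
    by_cases hm : m.1 = some k
    · exact Or.inr (ih (by tauto) hm)
    · left
      rcases glue_adj.mp h with ⟨h', -⟩ | ⟨k', hk'⟩
      · exact absurd (h' ▸ hx) hm
      · rcases Sym2.eq_iff.mp hk' with ⟨h₁, h₂⟩ | ⟨h₁, h₂⟩
        · simp [h₁] at hx
        · obtain rfl : k' = k := by simpa [h₁] using hx
          rw [hk', Sym2.eq_swap]

lemma glue_isAcyclic (hT : T.IsAcyclic) : (glue T att).IsAcyclic := by
  classical
  intro x c hc
  by_cases hlayer : ∀ y ∈ c.support, y.1 = x.1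
  · exact glue_induce_layer_isAcyclic hT x.1 _ (hc.induce hlayer)
  -- a cycle leaving its copy passes twice through the edge attaching one of the copies
  push Not at hlayer
  obtain ⟨y, hy, hyx⟩ := hlayer
  obtain ⟨k, hk⟩ : ∃ k : K, ¬(x.1 = some k ↔ y.1 = some k) := by
    cases hx : x.1 with
    | none =>
      obtain ⟨k, hk⟩ := Option.ne_none_iff_exists'.mp (hx ▸ hyx)
      exact ⟨k, by simp [hk]⟩
    | some k => exact ⟨k, by simp [hx ▸ hyx]⟩
  have hedges := hc.edges_nodup
  rw [← c.take_spec hy, Walk.edges_append, List.nodup_append] at hedges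
  exact hedges.2.2 _ (glue_cross_mem_edges _ hk) _ (glue_cross_mem_edges _ (by tauto)) rfl

lemma glue_isTree (hT : T.IsTree) : (glue T att).IsTree :=
  have := hT.connected.nonempty
  ⟨⟨glue_preconnected hT.connected.preconnected⟩, glue_isAcyclic hT.isAcyclic⟩

lemma glue_induce_setOf_mem_filter_preconnected {V : Type*} {lab : ι → Finset V}
    {P : Option K → Set V} [∀ p, DecidablePred (· ∈ P p)] {v : V}
    (hv : (T.induce {i | v ∈ lab i}).Preconnected)
    (hP : {p | v ∈ P p}.Subsingleton ∨ v ∈ P none ∧ ∀ k, v ∈ P (some k) → v ∈ lab (att k)) :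
    ((glue T att).induce {x | v ∈ (lab x.2).filter (· ∈ P x.1)}).Preconnected := by
  have h : {x : Option K × ι | v ∈ (lab x.2).filter (· ∈ P x.1)} =
      {p | v ∈ P p} ×ˢ {i | v ∈ lab i} := by
    ext
    simp [and_comm]
  exact h ▸ glue_induce_prod_preconnected hv hP

end Glue

end SimpleGraph

section Hypergraph
open SimpleGraph

variable {V : Type*} {E : Finset (Finset V)} {S : Finset V}

lemma Nbr.symm {x y : V} (h : Nbr E x y) : Nbr E y x :=
  let ⟨e, he, hx, hy⟩ := h
  ⟨e, he, hy, hx⟩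

def IsSWalk (E : Finset (Finset V)) (S : Finset V) (x : V) (zs : List V) (y : V) : Prop :=
  zs ≠ [] ∧ x ∈ S ∧ y ∈ S ∧ (∀ z ∈ zs, z ∉ S) ∧ (x :: zs ++ [y]).IsChain (Nbr E)

namespace IsSPath
variable {x y : V} {zs : List V}

lemma isSWalk (h : IsSPath E S x zs y) : IsSWalk E S x zs y :=
  ⟨h.1, h.2.1, h.2.2.1, h.2.2.2.1, h.2.2.2.2.2.1⟩

lemma not_nbr (h : IsSPath E S x zs y) : ¬ Nbr E x y := by
  have := List.length_pos_iff.mpr h.1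
  exact h.2.2.2.2.2.2 0 (zs.length + 1) (by omega) x (by simp) y (by simp)

end IsSPath

namespace IsSWalk
variable {x y a b : V} {zs : List V}

lemma shorten (h : IsSWalk E S x zs y) {i j : ℕ} (hij : i + 1 < j)
    (ha : (x :: zs ++ [y])[i]? = some a) (hb : (x :: zs ++ [y])[j]? = some b) (hab : Nbr E a b)
    (hend : ¬(i = 0 ∧ j = zs.length + 1)) :
    ∃ zs', zs'.length < zs.length ∧ IsSWalk E S x zs' y := by
  obtain ⟨-, hx, hy, hzs, hchain⟩ := h
  have hj : j ≤ zs.length + 1 := by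
    have := (List.getElem?_eq_some_iff.mp hb).1
    simp only [List.cons_append, List.length_cons, List.length_append, List.length_nil] at this
    omega
  have hcut : (x :: zs ++ [y]).take (i + 1) ++ (x :: zs ++ [y]).drop j =
      x :: (zs.take i ++ zs.drop (j - 1)) ++ [y] := by
    obtain ⟨j, rfl⟩ : ∃ j', j = j' + 1 := ⟨j - 1, by omega⟩
    simp only [List.cons_append, List.take_succ_cons, List.drop_succ_cons, Nat.add_sub_cancel,
      List.take_append_of_le_length (show i ≤ zs.length by omega),
      List.drop_append_of_le_length (show j ≤ zs.length by omega), List.append_assoc]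
  have hlen : (zs.take i ++ zs.drop (j - 1)).length = i + (zs.length - (j - 1)) := by
    simp only [List.length_append, List.length_take, List.length_drop]
    omega
  refine ⟨zs.take i ++ zs.drop (j - 1), by omega, fun hnil => ?_, hx, hy, fun z hz => ?_, ?_⟩
  · have := congrArg List.length hnil
    simp only [hlen, List.length_nil] at this
    omega
  · rcases List.mem_append.mp hz with hz | hz
    · exact hzs z (List.mem_of_mem_take hz)
    · exact hzs z (List.mem_of_mem_drop hz)
  · exact hcut ▸ hchain.take_append_drop ha hb hab

lemma nodup (h : IsSWalk E S x zs y) (hxy : ¬ Nbr E x y)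
    (hchord : ∀ i j : ℕ, i + 1 < j →
      ∀ a ∈ (x :: zs ++ [y])[i]?, ∀ b ∈ (x :: zs ++ [y])[j]?, ¬ Nbr E a b) :
    (x :: zs ++ [y]).Nodup := by
  obtain ⟨-, -, hyS, hzsS, hchain⟩ := h
  have hlen : (x :: zs ++ [y]).length = zs.length + 2 := by simp
  have hx : (x :: zs ++ [y])[0]? = some x := rfl
  have hy : (x :: zs ++ [y])[zs.length + 1]? = some y := by simp
  -- a repeated vertex followed by some vertex gives a chord; a repeat of `y` is impossible
  rw [List.nodup_iff_getElem?_ne_getElem?]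
  intro i j hij hj heq
  have ha := List.getElem?_eq_getElem (l := x :: zs ++ [y]) (i := i) (by omega)
  by_cases hjy : j + 1 < (x :: zs ++ [y]).length
  · exact hchord i (j + 1) (by omega) _ ha _ (List.getElem?_eq_getElem hjy)
      (hchain.rel_of_getElem?_eq_some (heq ▸ ha) (List.getElem?_eq_getElem hjy))
  obtain rfl : j = zs.length + 1 := by omega
  have hiy : (x :: zs ++ [y])[i]? = some y := heq.trans hy
  rcases Nat.eq_zero_or_pos i with rfl | hi
  · cases hx.symm.trans hiy
    obtain ⟨e, he, hxe, -⟩ :=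
      hchain.rel_of_getElem?_eq_some hx (List.getElem?_eq_getElem (i := 1) (by omega))
    exact hxy ⟨e, he, hxe, hxe⟩
  · obtain ⟨i, rfl⟩ : ∃ i', i = i' + 1 := ⟨i - 1, by omega⟩
    rw [List.cons_append, List.getElem?_cons_succ, List.getElem?_append_left (by omega)] at hiy
    exact hzsS y (List.mem_of_getElem? hiy) hyS

theorem exists_isSPath (h : IsSWalk E S x zs y) (hxy : ¬ Nbr E x y) :
    ∃ zs', IsSPath E S x zs' y := by
  induction hn : zs.length using Nat.strong_induction_on generalizing zs with | _ n ih
  by_cases hchord : ∀ i j : ℕ, i + 1 < j →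
      ∀ a ∈ (x :: zs ++ [y])[i]?, ∀ b ∈ (x :: zs ++ [y])[j]?, ¬ Nbr E a b
  · exact ⟨zs, h.1, h.2.1, h.2.2.1, h.2.2.2.1, h.nodup hxy hchord, h.2.2.2.2, hchord⟩
  push Not at hchord
  obtain ⟨i, j, hij, a, ha, b, hb, hab⟩ := hchord
  by_cases hend : i = 0 ∧ j = zs.length + 1
  · obtain ⟨rfl, rfl⟩ := hend
    obtain rfl : a = x := Option.some_inj.mp ha.symm
    obtain rfl : b = y := Option.some_inj.mp (by simpa using hb.symm)
    exact absurd hab hxy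
  obtain ⟨zs', hlt, h'⟩ := h.shorten hij ha hb hab hend
  exact ih _ (hn ▸ hlt) h' rfl

end IsSWalk

theorem forall_isSWalk_nbr_iff_not_exists_isSPath :
    (∀ x zs y, IsSWalk E S x zs y → Nbr E x y) ↔ ¬ ∃ x zs y, IsSPath E S x zs y := by
  refine ⟨fun h ⟨x, zs, y, hp⟩ => hp.not_nbr (h x zs y hp.isSWalk), fun h x zs y hw => ?_⟩
  by_contra hxy
  obtain ⟨zs', hp⟩ := hw.exists_isSPath hxy
  exact h ⟨x, zs', y, hp⟩

theorem SConnex.nbr_of_isSWalk (hE : SConnex E S) {x y : V} {zs : List V}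
    (h : IsSWalk E S x zs y) : Nbr E x y := by
  obtain ⟨ι, T, lab, hT, hedge, hlab, hrip, Sub, hSub, hSubS⟩ := hE
  obtain ⟨hzs, hx, hy, hzsS, hchain⟩ := h
  obtain ⟨z, zs, rfl⟩ := List.exists_cons_of_ne_nil hzs
  by_contra hxy
  set A : V → Set ι := fun v => {i | v ∈ lab i}
  have hA (u v : V) (huv : Nbr E u v) : (A u ∩ A v).Nonempty := by
    obtain ⟨e, he, hue, hve⟩ := huv
    obtain ⟨i, rfl⟩ := hedge e he
    exact ⟨i, hue, hve⟩
  have hAxy (i : ι) (hix : i ∈ A x) (hiy : i ∈ A y) : False := by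
    obtain ⟨e, he, hie⟩ := hlab i
    exact hxy ⟨e, he, hie hix, hie hiy⟩
  obtain ⟨hxz, hchain⟩ := List.isChain_cons_cons.mp (by simpa using hchain)
  obtain ⟨ix, hixSub, hix⟩ := (hSubS x).mp hx
  obtain ⟨iy, hiySub, hiy⟩ := (hSubS y).mp hy
  set Z := {i | ∃ u ∈ z :: zs ++ [y], i ∈ A u}
  have hZ : (T.induce Z).Preconnected :=
    induce_setOf_exists_mem_preconnected_of_isChain (fun u _ => hrip u)
      (hchain.imp fun {u v} => hA u v)
  have hSubA : (T.induce (Sub ∪ A y)).Preconnected :=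
    (induce_union_connected hSub (hrip y) ⟨iy, hiySub, hiy⟩).preconnected
  obtain ⟨m, ⟨hmx, hmSub | hmy⟩, u, hu, hmu⟩ := hT.inter_inter_nonempty (hrip x) hSubA hZ
    ⟨iy, Or.inr hiy, y, by simp, hiy⟩
    ((hA x z hxz).elim fun i ⟨hix, hiz⟩ => ⟨i, hix, z, by simp, hiz⟩) ⟨ix, hix, Or.inl hixSub⟩
  · rcases List.mem_append.mp hu with hu | hu
    · exact hzsS u hu ((hSubS u).mpr ⟨m, hmSub, hmu⟩)
    · exact hAxy m hmx (List.mem_singleton.mp hu ▸ hmu)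
  · exact hAxy m hmx hmy

/-- The components of `E - S` are the connected components of this graph that avoid `S`. -/
def outsideGraph (E : Finset (Finset V)) (S : Finset V) : SimpleGraph V where
  Adj u v := u ≠ v ∧ u ∉ S ∧ v ∉ S ∧ Nbr E u v
  symm := ⟨fun _ _ ⟨h, hu, hv, e, he, hue, hve⟩ => ⟨h.symm, hv, hu, e, he, hve, hue⟩⟩
  loopless := ⟨fun _ h => h.1 rfl⟩

lemma outsideGraph_adj {u v : V} :
    (outsideGraph E S).Adj u v ↔ u ≠ v ∧ u ∉ S ∧ v ∉ S ∧ Nbr E u v :=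
  Iff.rfl

def componentVerts (c : (outsideGraph E S).ConnectedComponent) : Set V :=
  {w | w ∉ S ∧ (outsideGraph E S).connectedComponentMk w = c}

def componentBoundary (c : (outsideGraph E S).ConnectedComponent) : Set V :=
  {v | v ∈ S ∧ ∃ w ∈ componentVerts c, Nbr E v w}

lemma notMem_of_mem_support_outsideGraph {u w : V} (hu : u ∉ S) (p : (outsideGraph E S).Walk u w) :
    ∀ z ∈ p.support, z ∉ S := by
  induction p with
  | nil => simpa using hu
  | cons h p ih => simpa [hu] using ih (outsideGraph_adj.mp h).2.2.1

lemma nbr_of_mem_componentBoundary (hS : ∀ x zs y, IsSWalk E S x zs y → Nbr E x y)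
    {c : (outsideGraph E S).ConnectedComponent} {v v' : V} (hv : v ∈ componentBoundary c)
    (hv' : v' ∈ componentBoundary c) : Nbr E v v' := by
  obtain ⟨hvS, w, ⟨hwS, rfl⟩, hvw⟩ := hv
  obtain ⟨hv'S, w', ⟨-, hw'⟩, hv'w'⟩ := hv'
  obtain ⟨p⟩ := ConnectedComponent.exact hw'.symm
  refine hS v p.support v' ⟨p.support_ne_nil, hvS, hv'S,
    notMem_of_mem_support_outsideGraph hwS p, ?_⟩
  have hhead : p.support.head? = some w := by
    rw [List.head?_eq_some_head p.support_ne_nil, p.head_support]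
  have hlast : p.support.getLast? = some w' := by
    rw [List.getLast?_eq_some_getLast p.support_ne_nil, p.getLast_support]
  refine List.IsChain.cons (List.IsChain.append
    (p.isChain_adj_support.imp fun _ _ h => (outsideGraph_adj.mp h).2.2.2)
    (List.isChain_singleton _) ?_) ?_
  · simp only [hlast, Option.mem_some_iff, List.head?_cons]
    rintro _ rfl _ rfl
    exact hv'w'.symm
  · simpa [List.head?_append, hhead] using hvw

lemma exists_componentBoundary_subset {ι : Type*} {T : SimpleGraph ι} {lab : ι → Finset V}
    (hT : T.IsTree) (hE : ∀ e ∈ E, ∃ i, lab i = e)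
    (hrip : ∀ v, (T.induce {i | v ∈ lab i}).Preconnected)
    (hS : ∀ x zs y, IsSWalk E S x zs y → Nbr E x y) (c : (outsideGraph E S).ConnectedComponent) :
    ∃ i, ∀ v ∈ componentBoundary c, v ∈ lab i := by
  classical
  obtain ⟨i, hi⟩ := hT.exists_forall_mem_of_pairwise (S.filter (· ∈ componentBoundary c))
    (A := fun v => {i | v ∈ lab i}) (fun v _ => hrip v) fun v hv v' hv' => by
      obtain ⟨e, he, hve, hv'e⟩ := nbr_of_mem_componentBoundary hS (Finset.mem_filter.mp hv).2
        (Finset.mem_filter.mp hv').2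
      obtain ⟨i, rfl⟩ := hE e he
      exact ⟨i, hve, hv'e⟩
  exact ⟨i, fun v hv => hi v (Finset.mem_filter.mpr ⟨hv.1, hv⟩)⟩

lemma mem_componentVerts_or_mem_componentBoundary {e : Finset V} (he : e ∈ E) {w u : V}
    (hw : w ∈ e) (hwS : w ∉ S) (hu : u ∈ e) :
    u ∈ componentVerts ((outsideGraph E S).connectedComponentMk w) ∨
      u ∈ componentBoundary ((outsideGraph E S).connectedComponentMk w) := by
  by_cases huS : u ∈ S
  · exact Or.inr ⟨huS, w, ⟨hwS, rfl⟩, e, he, hu, hw⟩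
  refine Or.inl ⟨huS, ConnectedComponent.sound ?_⟩
  by_cases huw : u = w
  · exact huw ▸ Reachable.rfl
  · exact Adj.reachable ⟨huw, huS, hwS, e, he, hu, hw⟩

/-- Copy `p` of the join tree keeps, of each label, the vertices in `copyVerts S C p`. -/
def copyVerts {n : ℕ} (S : Finset V) (C : Fin n → (outsideGraph E S).ConnectedComponent) :
    Option (Fin n) → Set V
  | none => S
  | some k => componentVerts (C k) ∪ componentBoundary (C k)

lemma copyVerts_subsingleton_or {n : ℕ} {C : Fin n → (outsideGraph E S).ConnectedComponent}
    (hC : C.Injective) {ι : Type*} {lab : ι → Finset V} {att : Fin n → ι}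
    (hatt : ∀ k, ∀ v ∈ componentBoundary (C k), v ∈ lab (att k)) (v : V) :
    {p | v ∈ copyVerts S C p}.Subsingleton ∨
      v ∈ copyVerts S C none ∧ ∀ k, v ∈ copyVerts S C (some k) → v ∈ lab (att k) := by
  by_cases hv : v ∈ S
  · exact Or.inr ⟨hv, fun k hk => hatt k v (hk.resolve_left fun h => h.1 hv)⟩
  have hverts {k} (hk : v ∈ copyVerts S C (some k)) :
      (outsideGraph E S).connectedComponentMk v = C k :=
    (hk.resolve_right fun h => hv h.1).2
  refine Or.inl ?_
  rintro (_ | k) hk (_ | k') hk'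
  · rfl
  · exact absurd hk hv
  · exact absurd hk' hv
  · exact congrArg some (hC ((hverts hk).symm.trans (hverts hk')))

theorem sconnex_of_forall_isSWalk (hacyc : HGAcyclic E) (hSvar : ∀ v ∈ S, ∃ e ∈ E, v ∈ e)
    (hS : ∀ x zs y, IsSWalk E S x zs y → Nbr E x y) : SConnex E S := by
  classical
  obtain ⟨ι, T, lab, hT, hlab, hE, hrip⟩ := hacyc
  set G := outsideGraph E S
  obtain ⟨n, C, hC, hCsurj⟩ : ∃ (n : ℕ) (C : Fin n → G.ConnectedComponent), C.Injective ∧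
      ∀ e ∈ E, ∀ w ∈ e, ∃ k, C k = G.connectedComponentMk w := by
    set comps := (E.biUnion id).image G.connectedComponentMk
    refine ⟨comps.card, fun k => comps.equivFin.symm k,
      Subtype.val_injective.comp comps.equivFin.symm.injective, fun e he w hw => ?_⟩
    refine ⟨comps.equivFin ⟨_, Finset.mem_image_of_mem _ (Finset.mem_biUnion.mpr ⟨e, he, hw⟩)⟩, ?_⟩
    simp
  choose att hatt using fun k => exists_componentBoundary_subset hT hE hrip hS (C k)
  refine ⟨Option (Fin n) × ι, glue T att, fun x => (lab x.2).filter (· ∈ copyVerts S C x.1),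
    glue_isTree hT, fun e he => ?_, fun x => ⟨lab x.2, hlab x.2, Finset.filter_subset _ _⟩,
    fun v => glue_induce_setOf_mem_filter_preconnected (P := copyVerts S C) (att := att) (hrip v)
      (copyVerts_subsingleton_or hC hatt v),
    {none} ×ˢ Set.univ, glue_induce_prod_preconnected
      (T.induceUnivIso.preconnected_iff.mpr hT.connected.preconnected)
      (Or.inl Set.subsingleton_singleton), fun v => ⟨fun hv => ?_, ?_⟩⟩
  · obtain ⟨i, rfl⟩ := hE e he
    by_cases heS : ∀ w ∈ lab i, w ∈ S
    · exact ⟨(none, i), Finset.filter_true_of_mem heS⟩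
    push Not at heS
    obtain ⟨w, hw, hwS⟩ := heS
    obtain ⟨k, hk⟩ := hCsurj _ he w hw
    refine ⟨(some k, i), Finset.filter_true_of_mem fun u hu => ?_⟩
    show u ∈ componentVerts (C k) ∪ componentBoundary (C k)
    exact hk ▸ mem_componentVerts_or_mem_componentBoundary he hw hwS hu
  · obtain ⟨e, he, hve⟩ := hSvar v hv
    obtain ⟨i, rfl⟩ := hE e he
    exact ⟨(none, i), ⟨rfl, trivial⟩, Finset.mem_filter.mpr ⟨hve, hv⟩⟩
  · rintro ⟨⟨p, i⟩, ⟨rfl, -⟩, hv⟩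
    exact (Finset.mem_filter.mp hv).2

end Hypergraph

/-- An acyclic hypergraph is `S`-connex iff it contains no
`S`-path.  In particular, if `a, b ∈ S` are non-neighbors and `c ∉ S` is a
neighbor of both, then the hypergraph is not `S`-connex. -/
theorem sconnex_iff_no_spath {V : Type*}
    (E : Finset (Finset V)) (S : Finset V)
    (hacyc : HGAcyclic E)
    (hSvar : ∀ v ∈ S, ∃ e ∈ E, v ∈ e) :
    (SConnex E S ↔ ¬ ∃ (x : V) (zs : List V) (y : V), IsSPath E S x zs y) ∧
    (∀ a b c : V, a ∈ S → b ∈ S → a ≠ b → ¬ Nbr E a b →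
        c ∉ S → Nbr E a c → Nbr E b c → ¬ SConnex E S) := by
  have hiff : SConnex E S ↔ ∀ x zs y, IsSWalk E S x zs y → Nbr E x y :=
    ⟨fun h _ _ _ => h.nbr_of_isSWalk, sconnex_of_forall_isSWalk hacyc hSvar⟩
  refine ⟨hiff.trans forall_isSWalk_nbr_iff_not_exists_isSPath, ?_⟩
  intro a b c ha hb _ hab hc hac hbc hE
  exact hab (hE.nbr_of_isSWalk ⟨List.cons_ne_nil c [], ha, hb, by simpa using hc,
    by simpa using ⟨hac, hbc.symm⟩⟩)
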